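/- Let x and x' be extended alcoves for GL_n. If r_{ij}(x) = r_{ij}(x') for all residues i, j ∈ ℤ/nℤ, then x = x'. (That is, an extended alcove is uniquely determined by the tuple of its invariants r_{ij}.) -/

import Mathlib

open Finset

/-- Elements of `ℤⁿ`; the coordinate `v(j)` for `1 ≤ j ≤ n` is `v ⟨j-1, _⟩`. -/
abbrev Vec (n : ℕ) := Fin n → ℤ

/-- The extension of a tuple `(x_0, …, x_{n-1})` by `x_n := x_0 - (1,…,1)`. -/
def xext (n : ℕ) [NeZero n] (x : Fin n → Vec n) (m : ℕ) : Vec n :=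
  if h : m < n then x ⟨m, h⟩ else fun j => x ⟨0, Nat.pos_of_ne_zero (NeZero.ne n)⟩ j - 1

/-- An extended alcove for `GL_n`: setting `x_n := x_0 - (1,…,1)`, for each
`i ∈ {0,…,n-1}` there is exactly one coordinate `j` with `x_{i+1}(j) = x_i(j) - 1`,
and `x_{i+1}(j') = x_i(j')` for all other coordinates `j'`. -/
def IsExtendedAlcove (n : ℕ) [NeZero n] (x : Fin n → Vec n) : Prop :=
  ∀ i : Fin n, ∃! j : Fin n,
    xext n x ((i : ℕ) + 1) j = xext n x (i : ℕ) j - 1 ∧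
      ∀ j' : Fin n, j' ≠ j → xext n x ((i : ℕ) + 1) j' = xext n x (i : ℕ) j'

/-- The standard alcove `ω`: `ω_i(j) = -1` for `j ≤ i` and `ω_i(j) = 0` for `j > i`
(coordinates `j ∈ {1,…,n}`). -/
def stdAlc (n : ℕ) (i : ℕ) : Vec n := fun j => if (j : ℕ) + 1 ≤ i then -1 else 0

/-- `μ`-permissibility for `μ = (1^{(r)}, 0^{(n-r)})`:
`ω_i ≤ x_i ≤ ω_i + (1,…,1)` componentwise, and `Σ_j x_i(j) = n - r - i`. -/
def IsMuPermissible (n : ℕ) (r : ℕ) (x : Fin n → Vec n) : Prop :=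
  ∀ i : Fin n,
    (∀ j, stdAlc n (i : ℕ) j ≤ x i j ∧ x i j ≤ stdAlc n (i : ℕ) j + 1) ∧
    (∑ j, x i j) = (n : ℤ) - (r : ℤ) - ((i : ℕ) : ℤ)

/-- The cyclic interval `(j, i] = {j+1, j+2, …, i} ⊆ ℤ/nℤ`; it is all of `ℤ/nℤ` when `i = j`. -/
def cycInt (n : ℕ) [NeZero n] (j i : ZMod n) : Finset (ZMod n) :=
  (Finset.Icc 1 (if i = j then n else (i - j).val)).image fun m : ℕ => j + (m : ZMod n)

/-- The `Fin n`-index of the coordinate `∈ {1,…,n}` representing the residue `k ∈ ℤ/nℤ`. -/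
def toIdx (n : ℕ) [NeZero n] (k : ZMod n) : Fin n := ⟨(k - 1).val, ZMod.val_lt _⟩

/-- The invariant `r_{ij}(x) = Σ_{k ∈ (j,i]} (ω_i(k) - x_i(k) + 1)` for residues
`i, j ∈ ℤ/nℤ`, the subscript `i` being taken via its representative in `{0,…,n-1}`. -/
def rInv (n : ℕ) [NeZero n] (x : Fin n → Vec n) (i j : ZMod n) : ℤ :=
  ∑ k ∈ cycInt n j i,
    (stdAlc n i.val (toIdx n k) - x ⟨i.val, ZMod.val_lt i⟩ (toIdx n k) + 1)

/-!
For fixed `i`, `r_{ij}` sums the entries `ω_i(k) - x_i(k) + 1` over the cyclic interval `(j, i]`,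
and `(k - 1, i]` is `(k, i]` with `k` adjoined (it is just `{k}` when `k = i`). Hence
`r_{i,k-1} - r_{i,k}` (resp. `r_{i,i-1}`) is the entry at `k`, and the invariants recover every
coordinate `x_i(k)`.
-/

theorem ZMod.natCast_injOn_Icc_one {n : ℕ} :
    Set.InjOn (fun m : ℕ => (m : ZMod n)) (Set.Icc 1 n) := by
  intro a ha b hb hab
  wlog hle : a ≤ b generalizing a b
  · exact (this hb ha hab.symm (le_of_not_ge hle)).symm
  have hdvd : n ∣ b - a :=
    (Nat.modEq_iff_dvd' hle).1 ((ZMod.natCast_eq_natCast_iff _ _ _).1 hab)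
  have := Nat.eq_zero_of_dvd_of_lt hdvd (by simp only [Set.mem_Icc] at ha hb; omega)
  omega

def cycLen (n : ℕ) (j i : ZMod n) : ℕ := if i = j then n else (i - j).val

section CyclicInterval

variable {n : ℕ} [NeZero n]

theorem cycLen_sub_one (k i : ZMod n) : cycLen n (k - 1) i = (i - k).val + 1 := by
  simp only [cycLen, ← sub_eq_zero (a := i), show i - (k - 1) = i - k + 1 by ring]
  set a := i - k
  have hcast : a + 1 = ((a.val + 1 : ℕ) : ZMod n) := by push_cast; rw [ZMod.natCast_zmod_val]
  have hlt := a.val_lt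
  split_ifs with h
  · rw [hcast, ZMod.natCast_eq_zero_iff] at h
    exact (Nat.eq_of_dvd_of_lt_two_mul (by omega) h (by omega)).symm
  · have hne : a.val + 1 ≠ n := fun he => h (by rw [hcast, he, ZMod.natCast_self])
    rw [hcast, ZMod.val_natCast_of_lt (by omega)]

theorem sum_cycInt_eq_sum_range {M : Type*} [AddCommMonoid M] (f : ZMod n → M) (j i : ZMod n) :
    ∑ k ∈ cycInt n j i, f k = ∑ m ∈ range (cycLen n j i), f (j + 1 + m) := by
  have hlen : cycLen n j i ≤ n := by
    unfold cycLen; split_ifs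
    exacts [le_rfl, (ZMod.val_lt _).le]
  rw [cycInt, ← cycLen, sum_image, ← Ico_add_one_right_eq_Icc, sum_Ico_eq_sum_range]
  · refine sum_congr rfl fun m _ => congrArg f ?_
    push_cast
    ring
  · refine (add_right_injective j).comp_injOn (ZMod.natCast_injOn_Icc_one.mono ?_)
    rw [coe_Icc]
    exact Set.Icc_subset_Icc_right hlen

theorem sum_cycInt_sub_one {M : Type*} [AddCommMonoid M] (f : ZMod n → M) (k i : ZMod n) :
    ∑ c ∈ cycInt n (k - 1) i, f c = f k + if k = i then 0 else ∑ c ∈ cycInt n k i, f c := by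
  rw [sum_cycInt_eq_sum_range, cycLen_sub_one, sum_range_succ', add_comm]
  congr 1
  · simp
  split_ifs with hk
  · simp [hk]
  · rw [sum_cycInt_eq_sum_range, cycLen, if_neg (Ne.symm hk)]
    refine sum_congr rfl fun m _ => congrArg f ?_
    push_cast
    ring

theorem eq_of_forall_sum_cycInt_eq {M : Type*} [AddCancelCommMonoid M] {i : ZMod n}
    {f g : ZMod n → M} (h : ∀ j, ∑ c ∈ cycInt n j i, f c = ∑ c ∈ cycInt n j i, g c) :
    f = g := by
  funext k
  have hk := h (k - 1)
  rw [sum_cycInt_sub_one, sum_cycInt_sub_one, ← h k] at hk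
  exact add_right_cancel hk

end CyclicInterval

theorem toIdx_natCast_add_one {n : ℕ} [NeZero n] (q : Fin n) : toIdx n ((q : ℕ) + 1) = q :=
  Fin.ext <| show (((q : ℕ) : ZMod n) + 1 - 1).val = q by
    rw [add_sub_cancel_right, ZMod.val_natCast_of_lt q.isLt]

theorem extended_alcove_determined_by_invariants_general
    (n : ℕ) [NeZero n] (x x' : Fin n → Vec n)
    (h : ∀ i j : ZMod n, rInv n x i j = rInv n x' i j) :
    x = x' := by
  funext p q
  have hrow := congrFun (eq_of_forall_sum_cycInt_eq (h p)) ((q : ℕ) + 1)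
  have hp : (⟨((p : ℕ) : ZMod n).val, ZMod.val_lt _⟩ : Fin n) = p :=
    Fin.ext (ZMod.val_natCast_of_lt p.isLt)
  simpa only [hp, toIdx_natCast_add_one, add_left_inj, sub_right_inj] using hrow

/-- An extended alcove for `GL_n` is uniquely determined by the tuple of its
invariants `(r_{ij}(x))_{i,j ∈ ℤ/nℤ}`. -/
theorem extended_alcove_determined_by_invariants
    (n : ℕ) (hn : 2 ≤ n) [NeZero n] (x x' : Fin n → Vec n)
    (hx : IsExtendedAlcove n x) (hx' : IsExtendedAlcove n x')
    (h : ∀ i j : ZMod n, rInv n x i j = rInv n x' i j) :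
    x = x' :=
  extended_alcove_determined_by_invariants_general n x x' h
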